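/- For every x ∈ Γ and every nonempty family {y_i} ⊆ [0°, x], x ∸ sup_i y_i = inf_i (x ∸ y_i); that is, the map x ∸ (−) sends suprema to infima on the interval [0°, x]. -/

import Mathlib

open scoped Classical

/-- The carrier of the "doubled unit interval" `Γ`: pairs `(r, b)` ordered
lexicographically, where `b = true` represents an exact value `r°`
(which must be rational) and `b = false` represents an approximation `r⁻`
(which must satisfy `r > 0`). -/
def GammaCarrier : Set (Lex (ℝ × Bool)) :=
  {p | 0 ≤ (ofLex p).1 ∧ (ofLex p).1 ≤ 1 ∧
    ((ofLex p).2 = true → ∃ q : ℚ, (q : ℝ) = (ofLex p).1) ∧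
    ((ofLex p).2 = false → 0 < (ofLex p).1)}

/-- The doubled unit interval `Γ`, with the (total) order inherited from the
lexicographic product: `r* < s*` iff `r < s`, and `q⁻ < q°` immediately. -/
abbrev Gamma : Type := {p : Lex (ℝ × Bool) // p ∈ GammaCarrier}

theorem mem_gammaCarrier {a : ℝ} {b : Bool} (h1 : 0 ≤ a) (h2 : a ≤ 1)
    (h3 : b = true → ∃ q : ℚ, (q : ℝ) = a) (h4 : b = false → 0 < a) :
    toLex (a, b) ∈ GammaCarrier := ⟨h1, h2, h3, h4⟩

/-- The underlying real number of an element of `Γ` (the map `γ`). -/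
def γmap (x : Gamma) : ℝ := (ofLex x.1).1

/-- An element of `Γ` is exact iff it is of `°`-type. -/
def gexact (x : Gamma) : Prop := (ofLex x.1).2 = true

theorem gmem (x : Gamma) : 0 ≤ (ofLex x.1).1 ∧ (ofLex x.1).1 ≤ 1 ∧
    ((ofLex x.1).2 = true → ∃ q : ℚ, (q : ℝ) = (ofLex x.1).1) ∧
    ((ofLex x.1).2 = false → 0 < (ofLex x.1).1) := x.2

/-- Smart constructor for `Γ`: clamps `r` into `[0,1]`, and produces the exact
value `r°` if `e = true` and `r` is rational (or `r = 0`), and `r⁻` otherwise. -/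
noncomputable def mk' (r : ℝ) (e : Bool) : Gamma :=
  if h : (e = true ∧ ∃ q : ℚ, (q : ℝ) = max 0 (min 1 r)) ∨ max 0 (min 1 r) = 0 then
    ⟨toLex (max 0 (min 1 r), true),
      mem_gammaCarrier (le_max_left 0 _) (max_le zero_le_one (min_le_left 1 r))
        (fun _ => h.elim (fun h' => h'.2) (fun h0 => ⟨0, by rw [h0]; norm_num⟩))
        (fun hc => absurd hc (by simp))⟩
  else
    ⟨toLex (max 0 (min 1 r), false),
      mem_gammaCarrier (le_max_left 0 _) (max_le zero_le_one (min_le_left 1 r))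
        (fun hc => absurd hc (by simp))
        (fun _ => lt_of_le_of_ne (le_max_left 0 _) (fun h0 => h (Or.inr h0.symm)))⟩

/-- `0°`, the bottom element of `Γ`. -/
noncomputable def gzero : Gamma := mk' 0 true
/-- `1°`, the top element of `Γ`. -/
noncomputable def gone : Gamma := mk' 1 true
/-- The section `ι° : [0,1] → Γ`, `r ↦ r°` for rational `r` and `r ↦ r⁻` otherwise. -/
noncomputable def icircR (r : ℝ) : Gamma := mk' r true
/-- The section `ι⁻ : [0,1] → Γ`, `0 ↦ 0°` and `r ↦ r⁻` for `r > 0`. -/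
noncomputable def iminusR (r : ℝ) : Gamma := mk' r false
/-- The exact value `q°` of a rational `q ∈ [0,1]`. -/
noncomputable def gq (q : ℚ) : Gamma := mk' (q : ℝ) true
/-- `ι°` as a map on the unit interval. -/
noncomputable def icirc (r : Set.Icc (0:ℝ) 1) : Gamma := icircR r.1
/-- `ι⁻` as a map on the unit interval. -/
noncomputable def iminusI (r : Set.Icc (0:ℝ) 1) : Gamma := iminusR r.1
/-- `γ : Γ → [0,1]` as a map into the unit interval. -/
noncomputable def gmapI (x : Gamma) : Set.Icc (0:ℝ) 1 := ⟨γmap x, (gmem x).1, (gmem x).2.1⟩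

/-- The partial subtraction `∸` on `Γ` (meaningful when `y ≤ x`):
`r° ∸ s° = (r−s)°`, `r⁻ ∸ s° = (r−s)⁻`, and `r* ∸ s⁻ = (r−s)°` if `r−s ∈ ℚ`,
`(r−s)⁻` otherwise. -/
noncomputable def gsub (x y : Gamma) : Gamma :=
  mk' (γmap x - γmap y)
    (if (gexact x ∧ gexact y) ∨ (¬ gexact y ∧ ∃ q : ℚ, (q : ℝ) = γmap x - γmap y)
      then true else false)

/-- The second partial subtraction `∸̃` on `Γ` (meaningful when `y ≤ x`):
`x ∸̃ x = 0°` and, for `y < x`, `r° ∸̃ s° = r⁻ ∸̃ s⁻ = r⁻ ∸̃ s° = (r−s)⁻` and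
`r° ∸̃ s⁻ = (r−s)°` if `r−s ∈ ℚ`, `(r−s)⁻` otherwise. -/
noncomputable def gsubt (x y : Gamma) : Gamma :=
  mk' (γmap x - γmap y)
    (if gexact x ∧ ¬ gexact y ∧ ∃ q : ℚ, (q : ℝ) = γmap x - γmap y then true else false)

/-- The partial addition `+` on `Γ` (meaningful when `x ≤ 1° ∸ y`):
`r° + s° = (r+s)°` and any sum involving a `⁻`-argument is of `⁻`-type. -/
noncomputable def gadd (x y : Gamma) : Gamma :=
  mk' (γmap x + γmap y) (if gexact x ∧ gexact y then true else false)

/-- A `Γ`-valued (finitely additive, probability) measure on a bounded lattice. -/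
def IsGMeasure {D : Type*} [Lattice D] [BoundedOrder D] (μ : D → Gamma) : Prop :=
  Monotone μ ∧ μ ⊥ = gzero ∧ μ ⊤ = gone ∧
  ∀ a b : D, gsubt (μ a) (μ (a ⊓ b)) ≤ gsub (μ (a ⊔ b)) (μ b) ∧
    gsubt (μ (a ⊔ b)) (μ b) ≤ gsub (μ a) (μ (a ⊓ b))

/-!
`x ∸ (−)` is antitone on `[0°, x]`, so `x ∸ sup S` is a lower bound of the `x ∸ y`, and it is
the greatest one when `sup S ∈ S`. An exact supremum `σ°` is always attained: otherwise every
element of `S` lies below `σ⁻`, a smaller upper bound. So if `sup S ∉ S` then `sup S = σ⁻` with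
`σ = sup γ(S)`, and a lower bound `z` of the `x ∸ y` has `γ z ≤ γ x - σ`. At equality an exact `z`
forces `γ x - σ` to be rational, and then `x ∸ σ⁻` is exact as well.
-/

lemma γmap_nonneg (a : Gamma) : 0 ≤ γmap a := (gmem a).1

lemma γmap_le_one (a : Gamma) : γmap a ≤ 1 := (gmem a).2.1

lemma exists_rat_of_gexact {a : Gamma} (h : gexact a) : ∃ q : ℚ, (q : ℝ) = γmap a :=
  (gmem a).2.2.1 h

lemma gexact_of_γmap_eq_zero {a : Gamma} (h : γmap a = 0) : gexact a := by
  by_contra hne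
  exact ((gmem a).2.2.2 (Bool.of_not_eq_true hne)).ne' h

lemma le_iff_γmap (a b : Gamma) :
    a ≤ b ↔ γmap a < γmap b ∨ (γmap a = γmap b ∧ (gexact a → gexact b)) := by
  rw [← Subtype.coe_le_coe, ← toLex_ofLex a.1, ← toLex_ofLex b.1, Prod.Lex.toLex_le_toLex,
    Bool.le_iff_imp]
  rfl

lemma γmap_mono : Monotone γmap := fun a b h => by
  rcases (le_iff_γmap a b).mp h with h | ⟨h, _⟩ <;> exact h.le

lemma γmap_mk' {r : ℝ} (h0 : 0 ≤ r) (h1 : r ≤ 1) (e : Bool) : γmap (mk' r e) = r := by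
  unfold mk'
  split_ifs <;> simp [γmap, min_eq_right h1, max_eq_right h0]

lemma gexact_mk'_iff {r : ℝ} (h0 : 0 ≤ r) (h1 : r ≤ 1) (e : Bool) :
    gexact (mk' r e) ↔ (e = true ∧ ∃ q : ℚ, (q : ℝ) = r) ∨ r = 0 := by
  unfold mk'
  simp only [min_eq_right h1, max_eq_right h0]
  split_ifs with h <;> simpa [gexact] using h

lemma le_icircR {y : Gamma} {r : ℝ} (hy : γmap y ≤ r) (hr : r ≤ 1) : y ≤ icircR r := by
  have hr0 : 0 ≤ r := (γmap_nonneg y).trans hy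
  rw [le_iff_γmap, icircR, γmap_mk' hr0 hr, gexact_mk'_iff hr0 hr]
  rcases hy.lt_or_eq with hlt | rfl
  · exact Or.inl hlt
  · exact Or.inr ⟨rfl, fun he => Or.inl ⟨rfl, exists_rat_of_gexact he⟩⟩

lemma le_iminusR_of_lt {y s : Gamma} (h : y < s) : y ≤ iminusR (γmap s) := by
  have hval : γmap (iminusR (γmap s)) = γmap s := γmap_mk' (γmap_nonneg s) (γmap_le_one s) _
  rw [le_iff_γmap, hval]
  rcases (γmap_mono h.le).lt_or_eq with hlt | heq
  · exact Or.inl hlt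
  · refine Or.inr ⟨heq, fun hy => absurd h (not_lt.mpr ?_)⟩
    exact (le_iff_γmap s y).mpr (Or.inr ⟨heq.symm, fun _ => hy⟩)

lemma isLUB_image_γmap {S : Set Gamma} {s : Gamma} (hne : S.Nonempty) (hs : IsLUB S s) :
    IsLUB (γmap '' S) (γmap s) := by
  refine ⟨γmap_mono.mem_upperBounds_image hs.1, fun r hr => ?_⟩
  rcases le_total r 1 with hr1 | h1r
  · have hr0 : 0 ≤ r := (γmap_nonneg _).trans (hr (Set.mem_image_of_mem _ hne.some_mem))
    simpa [icircR, γmap_mk' hr0 hr1] using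
      γmap_mono (hs.2 fun y hy => le_icircR (hr (Set.mem_image_of_mem _ hy)) hr1)
  · exact (γmap_le_one s).trans h1r

lemma mem_of_isLUB_of_gexact {S : Set Gamma} {s : Gamma} (hne : S.Nonempty) (hs : IsLUB S s)
    (he : gexact s) : s ∈ S := by
  by_contra hsS
  have hlt : ∀ y ∈ S, y < s := fun y hy => (hs.1 hy).lt_of_ne fun h => hsS (h ▸ hy)
  have hs0 : γmap s = 0 := by
    have hle : s ≤ iminusR (γmap s) := hs.2 fun y hy => le_iminusR_of_lt (hlt y hy)
    have hval : γmap (iminusR (γmap s)) = γmap s := γmap_mk' (γmap_nonneg s) (γmap_le_one s) _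
    have hexact : gexact (iminusR (γmap s)) :=
      (((le_iff_γmap _ _).mp hle).resolve_left (by rw [hval]; exact lt_irrefl _)).2 he
    rw [iminusR, gexact_mk'_iff (γmap_nonneg s) (γmap_le_one s)] at hexact
    simpa using hexact
  obtain ⟨y, hy⟩ := hne
  have hy0 : γmap y = 0 := le_antisymm (hs0 ▸ γmap_mono (hlt y hy).le) (γmap_nonneg y)
  exact (hlt y hy).not_ge ((le_iff_γmap s y).mpr
    (Or.inr ⟨hs0.trans hy0.symm, fun _ => gexact_of_γmap_eq_zero hy0⟩))

lemma γmap_gsub {x y : Gamma} (h : y ≤ x) : γmap (gsub x y) = γmap x - γmap y :=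
  γmap_mk' (sub_nonneg.mpr (γmap_mono h)) (by linarith [γmap_le_one x, γmap_nonneg y]) _

lemma gexact_gsub_iff {x y : Gamma} (h : y ≤ x) :
    gexact (gsub x y) ↔
      ((∃ q : ℚ, (q : ℝ) = γmap x - γmap y) ∧ (gexact x ∨ ¬ gexact y)) ∨
        γmap x - γmap y = 0 := by
  unfold gsub
  rw [gexact_mk'_iff (sub_nonneg.mpr (γmap_mono h)) (by linarith [γmap_le_one x, γmap_nonneg y])]
  by_cases hx : gexact x <;> by_cases hy : gexact y <;> simp [hx, hy]

lemma gsub_anti {x y y' : Gamma} (hy : y ≤ y') (hy' : y' ≤ x) : gsub x y' ≤ gsub x y := by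
  have hyx : y ≤ x := hy.trans hy'
  rw [le_iff_γmap, γmap_gsub hy', γmap_gsub hyx]
  rcases (le_iff_γmap y y').mp hy with hlt | ⟨heq, himp⟩
  · exact Or.inl (by linarith)
  · refine Or.inr ⟨by rw [heq], fun he => ?_⟩
    rw [gexact_gsub_iff hy', ← heq] at he
    rw [gexact_gsub_iff hyx]
    exact he.imp_left fun ⟨hq, hxy⟩ => ⟨hq, hxy.imp_right (mt himp)⟩

lemma le_gsub_of_not_gexact {x y z : Gamma} (hy : y ≤ x) (hne : ¬ gexact y)
    (hz : γmap z ≤ γmap x - γmap y) : z ≤ gsub x y := by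
  rw [le_iff_γmap, γmap_gsub hy]
  refine hz.lt_or_eq.imp_right fun heq => ⟨heq, fun he => ?_⟩
  obtain ⟨q, hq⟩ := exists_rat_of_gexact he
  exact (gexact_gsub_iff hy).mpr (Or.inl ⟨⟨q, hq.trans heq⟩, Or.inr hne⟩)

/-- for every `x ∈ Γ` and every nonempty family `S ⊆ [0°, x]`,
the map `x ∸ (−)` sends the supremum of `S` to the infimum of
`{x ∸ y | y ∈ S}`. -/
theorem stmt_12 (x : Gamma) (S : Set Gamma) (hne : S.Nonempty)
    (hS : ∀ y ∈ S, y ≤ x) (s : Gamma) (hs : IsLUB S s) :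
    IsGLB {z | ∃ y ∈ S, z = gsub x y} (gsub x s) := by
  have hsx : s ≤ x := hs.2 hS
  refine ⟨by rintro _ ⟨y, hy, rfl⟩; exact gsub_anti (hs.1 hy) hsx, fun z hz => ?_⟩
  by_cases hsS : s ∈ S
  · exact hz ⟨s, hsS, rfl⟩
  have hbound : ∀ y ∈ S, γmap y ≤ γmap x - γmap z := fun y hy => by
    have := γmap_mono (hz ⟨y, hy, rfl⟩)
    rw [γmap_gsub (hS y hy)] at this
    linarith
  have hγs : γmap s ≤ γmap x - γmap z :=
    (isLUB_image_γmap hne hs).2 (Set.forall_mem_image.mpr hbound)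
  exact le_gsub_of_not_gexact hsx (mt (mem_of_isLUB_of_gexact hne hs) hsS) (by linarith)
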